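/- Let X' = (t',x') ∈ Q, and let R > 0 and 0 < t̄ < t' be such that the closure of B_t̄(X',R) is contained in Q and u(t,x) = min over y ∈ Ω of [(t − t̄) L((x − y)/(t − t̄)) + u(t̄, y)] for each (t,x) ∈ B_t̄(X',R). Then for every x, h ∈ ℝⁿ such that x − h and x + h belong to B(x',R), one has u(t', x+h) + u(t', x−h) − 2 u(t', x) ≤ (Λ/(t' − t̄)) |h|², where Λ = max{⟨A⁻¹z, z⟩ : z ∈ ℝⁿ, |z| = 1}. -/
import Mathlib


open scoped RealInnerProductSpace
open Filter Topology Set Metric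

noncomputable section

/-- The Lagrangian `L(q) = ½ ⟨A⁻¹ q, q⟩`. -/
def Lag {n : ℕ} (A : Matrix (Fin n) (Fin n) ℝ) (q : EuclideanSpace ℝ (Fin n)) : ℝ :=
  (1 / 2) * ⟪Matrix.toEuclideanLin A⁻¹ q, q⟫

/-- The Hamiltonian `H(p) = ½ ⟨A p, p⟩`. -/
def Ham {n : ℕ} (A : Matrix (Fin n) (Fin n) ℝ) (p : EuclideanSpace ℝ (Fin n)) : ℝ :=
  (1 / 2) * ⟪Matrix.toEuclideanLin A p, p⟫

/-- Euclidean norm on `ℝ × ℝⁿ`. -/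
def pnorm {n : ℕ} (V : ℝ × EuclideanSpace ℝ (Fin n)) : ℝ :=
  Real.sqrt (V.1 ^ 2 + ‖V.2‖ ^ 2)

/-- Euclidean pairing on `ℝ × ℝⁿ`. -/
def pairR {n : ℕ} (P V : ℝ × EuclideanSpace ℝ (Fin n)) : ℝ :=
  P.1 * V.1 + ⟪P.2, V.2⟫

/-- Open Euclidean ball in `ℝ × ℝⁿ`. -/
def pball {n : ℕ} (X : ℝ × EuclideanSpace ℝ (Fin n)) (R : ℝ) :
    Set (ℝ × EuclideanSpace ℝ (Fin n)) :=
  {Y | pnorm (Y - X) < R}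

/-- `B_t̄(X,R) = ((t̄,∞) × ℝⁿ) ∩ B(X,R)`. -/
def tball {n : ℕ} (tbar : ℝ) (X : ℝ × EuclideanSpace ℝ (Fin n)) (R : ℝ) :
    Set (ℝ × EuclideanSpace ℝ (Fin n)) :=
  {Y | tbar < Y.1} ∩ pball X R

/-- Superdifferential of `w` at `X`:
`P ∈ D⁺w(X)` iff `limsup_{Y→X} (w(Y)−w(X)−⟨P,Y−X⟩)/|Y−X| ≤ 0`. -/
def superDiff {n : ℕ} (w : ℝ × EuclideanSpace ℝ (Fin n) → ℝ)
    (X P : ℝ × EuclideanSpace ℝ (Fin n)) : Prop :=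
  ∀ ε > 0, ∀ᶠ Y in 𝓝[≠] X, w Y - w X - pairR P (Y - X) ≤ ε * pnorm (Y - X)

/-- semiconcavity estimate in space: for `x ± h ∈ B(x',R)`,
`u(t',x+h) + u(t',x−h) − 2u(t',x) ≤ (Λ/(t'−t̄)) |h|²`, where
`Λ = max{⟨A⁻¹z,z⟩ : |z| = 1}`. -/
theorem statement5
    {n : ℕ} (hn : 1 ≤ n)
    (Ω : Set (EuclideanSpace ℝ (Fin n))) (hΩo : IsOpen Ω)
    (hΩb : Bornology.IsBounded Ω)
    (A : Matrix (Fin n) (Fin n) ℝ) (hA : A.PosDef)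
    (Q : Set (ℝ × EuclideanSpace ℝ (Fin n))) (hQ : Q = Ioi (0 : ℝ) ×ˢ Ω)
    (φ u : ℝ × EuclideanSpace ℝ (Fin n) → ℝ)
    (hφ : ∃ K, LipschitzOnWith K φ (frontier Q))
    (hcomp : ∀ t x s y, (t, x) ∈ frontier Q → (s, y) ∈ frontier Q → 0 ≤ s → s < t →
      φ (t, x) - φ (s, y) ≤ (t - s) * Lag A ((t - s)⁻¹ • (x - y)))
    (hu : ∀ X ∈ closure Q, IsLeast
      {v | ∃ s y, (s, y) ∈ frontier Q ∧ s < X.1 ∧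
        v = (X.1 - s) * Lag A ((X.1 - s)⁻¹ • (X.2 - y)) + φ (s, y)} (u X))
    (t' : ℝ) (x' : EuclideanSpace ℝ (Fin n)) (hX' : (t', x') ∈ Q)
    (R : ℝ) (hR : 0 < R) (tbar : ℝ) (htbar0 : 0 < tbar) (htbar : tbar < t')
    (hcl : closure (tball tbar (t', x') R) ⊆ Q)
    (hmin : ∀ X ∈ tball tbar (t', x') R,
      IsLeast {v | ∃ y ∈ Ω,
        v = (X.1 - tbar) * Lag A ((X.1 - tbar)⁻¹ • (X.2 - y)) + u (tbar, y)} (u X))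
    (Λ : ℝ) (hΛ : IsGreatest {r | ∃ z : EuclideanSpace ℝ (Fin n), ‖z‖ = 1 ∧
      r = ⟪Matrix.toEuclideanLin A⁻¹ z, z⟫} Λ)
    (x h : EuclideanSpace ℝ (Fin n))
    (hxp : x + h ∈ Metric.ball x' R) (hxm : x - h ∈ Metric.ball x' R) :
    u (t', x + h) + u (t', x - h) - 2 * u (t', x) ≤ Λ / (t' - tbar) * ‖h‖ ^ 2 := by
  have htt : (0:ℝ) < t' - tbar := sub_pos.2 htbar
  have hxmem : ∀ z : EuclideanSpace ℝ (Fin n), ‖z - x'‖ < R →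
      (t', z) ∈ tball tbar (t', x') R := by
    intro z hz
    refine ⟨htbar, ?_⟩
    show pnorm ((t', z) - (t', x')) < R
    have he : ((t', z) - (t', x') : ℝ × EuclideanSpace ℝ (Fin n)) = (0, z - x') := by
      simp [Prod.ext_iff]
    rw [he]
    unfold pnorm
    simpa [Real.sqrt_sq (norm_nonneg (z - x'))] using hz
  have hp : ‖x + h - x'‖ < R := by rw [← dist_eq_norm]; exact hxp
  have hm : ‖x - h - x'‖ < R := by rw [← dist_eq_norm]; exact hxm
  have hmid : ‖x - x'‖ < R := by
    have hx : x - x' = (1/2 : ℝ) • ((x + h - x') + (x - h - x')) := by module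
    calc ‖x - x'‖ = (1/2) * ‖(x + h - x') + (x - h - x')‖ := by
          rw [hx, norm_smul]; norm_num
      _ ≤ (1/2) * (‖x + h - x'‖ + ‖x - h - x'‖) := by gcongr; exact norm_add_le _ _
      _ < R := by linarith
  obtain ⟨⟨y, hyΩ, hyval⟩, _⟩ := hmin (t', x) (hxmem x hmid)
  have hubp := (hmin (t', x + h) (hxmem _ hp)).2 ⟨y, hyΩ, rfl⟩
  have hubm := (hmin (t', x - h) (hxmem _ hm)).2 ⟨y, hyΩ, rfl⟩
  set q := (t' - tbar)⁻¹ • (x - y) with hq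
  set k := (t' - tbar)⁻¹ • h with hk
  have ep : (t' - tbar)⁻¹ • (x + h - y) = q + k := by rw [hq, hk]; module
  have em : (t' - tbar)⁻¹ • (x - h - y) = q - k := by rw [hq, hk]; module
  have hquad : Lag A (q + k) + Lag A (q - k) - 2 * Lag A q
      = ⟪Matrix.toEuclideanLin A⁻¹ k, k⟫ := by
    unfold Lag
    simp only [map_add, map_sub, inner_add_left, inner_add_right, inner_sub_left,
      inner_sub_right]
    ring
  have hbd : ⟪Matrix.toEuclideanLin A⁻¹ k, k⟫ ≤ Λ * ‖k‖ ^ 2 := by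
    rcases eq_or_ne k 0 with h0 | h0
    · simp [h0]
    · have hk' : (0:ℝ) < ‖k‖ := norm_pos_iff.2 h0
      have hz : ‖((‖k‖)⁻¹ • k : EuclideanSpace ℝ (Fin n))‖ = 1 := by
        rw [norm_smul]
        simp [abs_of_pos (inv_pos.2 hk'), inv_mul_cancel₀ hk'.ne']
      have hle := hΛ.2 ⟨_, hz, rfl⟩
      rw [map_smul, real_inner_smul_left, real_inner_smul_right] at hle
      have h2 := mul_le_mul_of_nonneg_left hle (sq_nonneg ‖k‖)
      calc ⟪Matrix.toEuclideanLin A⁻¹ k, k⟫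
          = ‖k‖ ^ 2 * ((‖k‖)⁻¹ * ((‖k‖)⁻¹ * ⟪Matrix.toEuclideanLin A⁻¹ k, k⟫)) := by
            field_simp
        _ ≤ ‖k‖ ^ 2 * Λ := h2
        _ = Λ * ‖k‖ ^ 2 := by ring
  have hknorm : ‖k‖ = (t' - tbar)⁻¹ * ‖h‖ := by
    rw [hk, norm_smul, Real.norm_eq_abs, abs_of_pos (inv_pos.2 htt)]
  calc u (t', x + h) + u (t', x - h) - 2 * u (t', x)
      ≤ ((t' - tbar) * Lag A (q + k) + u (tbar, y))
        + ((t' - tbar) * Lag A (q - k) + u (tbar, y))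
        - 2 * ((t' - tbar) * Lag A q + u (tbar, y)) := by
        rw [show ((t', x + h).1 : ℝ) = t' from rfl] at hubp
        rw [ep] at hubp
        rw [em] at hubm
        rw [hq] at hyval
        linarith [hubp, hubm]
    _ = (t' - tbar) * (Lag A (q + k) + Lag A (q - k) - 2 * Lag A q) := by ring
    _ = (t' - tbar) * ⟪Matrix.toEuclideanLin A⁻¹ k, k⟫ := by rw [hquad]
    _ ≤ (t' - tbar) * (Λ * ‖k‖ ^ 2) := mul_le_mul_of_nonneg_left hbd htt.le
    _ = Λ / (t' - tbar) * ‖h‖ ^ 2 := by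
        rw [hknorm]; field_simp
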